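/- Let n ≥ 2 and let u ∈ C²(ℝⁿ₊) satisfy div(yₙ^{2−n} ∇u) = 0 in ℝⁿ₊. Then for every x ∈ ∂ℝⁿ₊ and λ > 0, the logarithmic Kelvin transform v(y) = u(x + λ²(y−x)/|y−x|²) + ln(λ/|y−x|) also satisfies div(yₙ^{2−n} ∇v) = 0 in ℝⁿ₊. -/

import Mathlib

open Real Filter

/-- Partial derivative of `u` in the `i`-th coordinate direction. -/
noncomputable def partialD {n : ℕ} (i : Fin n) (u : EuclideanSpace ℝ (Fin n) → ℝ)
    (y : EuclideanSpace ℝ (Fin n)) : ℝ :=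
  fderiv ℝ u y (EuclideanSpace.single i 1)

/-- The Laplacian of `u`, as a sum of repeated partial derivatives. -/
noncomputable def lapl {n : ℕ} (u : EuclideanSpace ℝ (Fin n) → ℝ)
    (y : EuclideanSpace ℝ (Fin n)) : ℝ :=
  ∑ j, partialD j (fun z => partialD j u z) y

/-- The weighted operator `div(yᵢ^a ∇u) = yᵢ^a Δu + a yᵢ^(a-1) ∂u/∂yᵢ`,
where `i` plays the role of the last coordinate. -/
noncomputable def divA {n : ℕ} (i : Fin n) (a : ℝ) (u : EuclideanSpace ℝ (Fin n) → ℝ)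
    (y : EuclideanSpace ℝ (Fin n)) : ℝ :=
  (y i) ^ a * lapl u y + a * (y i) ^ (a - 1) * partialD i u y

/-- The inversion `y ↦ x + λ²(y-x)/|y-x|²` centered at `x` with radius `λ`. -/
noncomputable def inversion {n : ℕ} (x : EuclideanSpace ℝ (Fin n)) (lam : ℝ)
    (y : EuclideanSpace ℝ (Fin n)) : EuclideanSpace ℝ (Fin n) :=
  x + (lam ^ 2 / ‖y - x‖ ^ 2) • (y - x)

/-- The Kelvin-type transform `u_{x,λ}(y) = (λ/|y-x|)^(n-2+a) u(x + λ²(y-x)/|y-x|²)`. -/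
noncomputable def kelvin {n : ℕ} (a : ℝ) (x : EuclideanSpace ℝ (Fin n)) (lam : ℝ)
    (u : EuclideanSpace ℝ (Fin n) → ℝ) (y : EuclideanSpace ℝ (Fin n)) : ℝ :=
  (lam / ‖y - x‖) ^ ((n : ℝ) - 2 + a) * u (inversion x lam y)

/-!
The inversion `I` about the sphere `|y - x| = λ` is conformal: its differential at `y` is
`λ²/|y-x|²` times the reflection in `(y-x)⊥`, so the trace of the Hessian of `u` is only rescaled,
and `Δ(u ∘ I)(y) = (λ²/|y-x|²)² Δu(I y) + ∇u(I y) · ΔI(y)` with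
`ΔI(y) = 2(2-n) λ² (y-x)/|y-x|⁴`. The logarithm contributes `Δ = (2-n)/|y-x|²` and, as `xₙ = 0`,
`∂ₙ = -yₙ/|y-x|²`. For `a = 2 - n` all these terms cancel in `yₙ Δv + a ∂ₙv`, which leaves
`λ²/|y-x|²` times `zₙ Δu(z) + a ∂ₙu(z)` at `z = I y`, because `zₙ = (λ²/|y-x|²) yₙ`; this
vanishes by the equation for `u`, as `z` lies in the upper half space.
-/

open Topology

local notation "𝔼" n:max => EuclideanSpace ℝ (Fin n)

local notation "𝐞" j:max => EuclideanSpace.single j (1 : ℝ)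

section Coordinates

variable {n : ℕ}

theorem EuclideanSpace.sum_apply_mul_single (T : 𝔼 n →L[ℝ] ℝ) (w : 𝔼 n) :
    ∑ j, w j * T (𝐞 j) = T w := by
  conv_rhs => rw [← (EuclideanSpace.basisFun (Fin n) ℝ).sum_repr w]
  simp [map_sum, smul_eq_mul]

theorem EuclideanSpace.sum_apply_sq (w : 𝔼 n) : ∑ j, w j ^ 2 = ‖w‖ ^ 2 := by
  simp [EuclideanSpace.norm_sq_eq]

theorem EuclideanSpace.sum_apply_smul_single (w : 𝔼 n) :
    ∑ j, w j • 𝐞 j = w := by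
  simpa using (EuclideanSpace.basisFun (Fin n) ℝ).sum_repr w

/-- The trace of a bilinear form is invariant under the reflection in the hyperplane `w⊥`. -/
theorem sum_reflection_apply_apply (B : 𝔼 n →L[ℝ] 𝔼 n →L[ℝ] ℝ) {w : 𝔼 n} (hw : w ≠ 0) :
    ∑ j, B (𝐞 j - (2 * w j / ‖w‖ ^ 2) • w) (𝐞 j - (2 * w j / ‖w‖ ^ 2) • w)
      = ∑ j, B (𝐞 j) (𝐞 j) := by
  have hr : ‖w‖ ^ 2 ≠ 0 := by positivity
  have hleft := EuclideanSpace.sum_apply_mul_single (B.flip w) w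
  have hright := EuclideanSpace.sum_apply_mul_single (B w) w
  simp only [ContinuousLinearMap.flip_apply] at hleft
  calc _ = ∑ j, (B (𝐞 j) (𝐞 j)
          - 2 / ‖w‖ ^ 2 * (w j * B (𝐞 j) w)
          - 2 / ‖w‖ ^ 2 * (w j * B w (𝐞 j))
          + 4 / (‖w‖ ^ 2) ^ 2 * B w w * w j ^ 2) := by
        refine Finset.sum_congr rfl fun j _ => ?_
        simp only [map_sub, map_smul, sub_apply, smul_apply, smul_eq_mul]
        ring
    _ = ∑ j, B (𝐞 j) (𝐞 j) - 2 / ‖w‖ ^ 2 * B w w - 2 / ‖w‖ ^ 2 * B w w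
          + 4 / (‖w‖ ^ 2) ^ 2 * B w w * ‖w‖ ^ 2 := by
        simp only [Finset.sum_add_distrib, Finset.sum_sub_distrib, ← Finset.mul_sum, hleft,
          hright, EuclideanSpace.sum_apply_sq]
    _ = _ := by field_simp; ring

end Coordinates

section PartialDerivatives

variable {n : ℕ}

theorem HasFDerivAt.partialD_eq {f : 𝔼 n → ℝ} {f' : 𝔼 n →L[ℝ] ℝ} {y : 𝔼 n}
    (hf : HasFDerivAt f f' y) (j : Fin n) : partialD j f y = f' (𝐞 j) := by
  rw [partialD, hf.fderiv]

theorem partialD_partialD_eq_fderiv_fderiv {u : 𝔼 n → ℝ} {y : 𝔼 n}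
    (hu : DifferentiableAt ℝ (fderiv ℝ u) y) (j : Fin n) :
    partialD j (fun p => partialD j u p) y = fderiv ℝ (fderiv ℝ u) y (𝐞 j) (𝐞 j) :=
  (hu.hasFDerivAt.clm_apply (hasFDerivAt_const _ y)).partialD_eq j |>.trans (by simp)

theorem lapl_eq_sum_fderiv_fderiv {u : 𝔼 n → ℝ} {y : 𝔼 n} (hu : DifferentiableAt ℝ (fderiv ℝ u) y) :
    lapl u y = ∑ j, fderiv ℝ (fderiv ℝ u) y (𝐞 j) (𝐞 j) :=
  Finset.sum_congr rfl fun j _ => partialD_partialD_eq_fderiv_fderiv hu j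

theorem divA_eq_rpow_mul (i : Fin n) (a : ℝ) (u : 𝔼 n → ℝ) {y : 𝔼 n} (hy : 0 < y i) :
    divA i a u y = y i ^ (a - 1) * (y i * lapl u y + a * partialD i u y) := by
  rw [divA, Real.rpow_sub_one hy.ne']
  field_simp

end PartialDerivatives

section Inversion

variable {n : ℕ} {x p : 𝔼 n}

theorem hasFDerivAt_inv_norm_sub_sq (hp : p ≠ x) :
    HasFDerivAt (fun q => (‖q - x‖ ^ 2)⁻¹) (-(2 / (‖p - x‖ ^ 2) ^ 2) • innerSL ℝ (p - x)) p := by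
  have hr : ‖p - x‖ ^ 2 ≠ 0 := by simpa [sub_eq_zero] using hp
  refine ((hasDerivAt_inv hr).comp_hasFDerivAt p ((hasFDerivAt_id p).sub_const x).norm_sq)
    |>.congr_fderiv ?_
  ext h
  simp only [id_eq, map_sub, ContinuousLinearMap.comp_id, neg_smul, neg_apply, smul_apply,
    sub_apply, coe_innerSL_apply, nsmul_eq_mul, Nat.cast_ofNat, smul_eq_mul, neg_inj]
  ring

theorem hasFDerivAt_apply_sub (j : Fin n) :
    HasFDerivAt (fun q : 𝔼 n => q j - x j) (EuclideanSpace.proj (𝕜 := ℝ) j) p :=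
  (EuclideanSpace.proj (𝕜 := ℝ) j).hasFDerivAt.sub_const (x j)

theorem inner_sub_single (j : Fin n) : inner ℝ (p - x) (𝐞 j) = p j - x j := by
  simp [EuclideanSpace.inner_single_right]

noncomputable def inversionPartial (x : 𝔼 n) (lam : ℝ) (j : Fin n) (q : 𝔼 n) : 𝔼 n :=
  (lam ^ 2 / ‖q - x‖ ^ 2) • (𝐞 j - (2 * (q j - x j) / ‖q - x‖ ^ 2) • (q - x))

theorem hasFDerivAt_inversion (lam : ℝ) (hp : p ≠ x) :
    ∃ D : 𝔼 n →L[ℝ] 𝔼 n, HasFDerivAt (inversion x lam) D p ∧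
      ∀ j, D (𝐞 j) = inversionPartial x lam j p := by
  have hfun : inversion x lam = fun q => x + (lam ^ 2 * (‖q - x‖ ^ 2)⁻¹) • (q - x) := by
    funext q; rw [inversion, div_eq_mul_inv]
  refine ⟨_, hfun ▸ (((hasFDerivAt_inv_norm_sub_sq hp).const_mul (lam ^ 2)).smul
    ((hasFDerivAt_id p).sub_const x)).const_add x, fun j => ?_⟩
  simp only [smul_apply, add_apply, ContinuousLinearMap.smulRight_apply, innerSL_apply_apply,
    inner_sub_single, ContinuousLinearMap.id_apply, id, smul_eq_mul, inversionPartial]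
  module

noncomputable def inversionSecondPartial (x : 𝔼 n) (lam : ℝ) (j : Fin n) (q : 𝔼 n) : 𝔼 n :=
  (-(4 * lam ^ 2 / (‖q - x‖ ^ 2) ^ 2) * (q j - x j)) • 𝐞 j
    - (2 * lam ^ 2 / (‖q - x‖ ^ 2) ^ 2
      - 8 * lam ^ 2 / (‖q - x‖ ^ 2) ^ 3 * (q j - x j) ^ 2) • (q - x)

theorem hasFDerivAt_inversionPartial (lam : ℝ) (hp : p ≠ x) (j : Fin n) :
    ∃ D : 𝔼 n →L[ℝ] 𝔼 n, HasFDerivAt (inversionPartial x lam j) D p ∧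
      D (𝐞 j) = inversionSecondPartial x lam j p := by
  have hfun : inversionPartial x lam j = fun q => (lam ^ 2 * (‖q - x‖ ^ 2)⁻¹) • 𝐞 j
      - (2 * lam ^ 2 * (q j - x j) * ((‖q - x‖ ^ 2)⁻¹) ^ 2) • (q - x) := by
    funext q
    simp only [inversionPartial]
    module
  have hρ := hasFDerivAt_inv_norm_sub_sq hp
  rw [hfun]
  refine ⟨_, ((hρ.const_mul (lam ^ 2)).smul_const _).sub
    ((((hasFDerivAt_apply_sub j).const_mul (2 * lam ^ 2)).mul (hρ.pow 2)).smul
      ((hasFDerivAt_id p).sub_const x)), ?_⟩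
  simp only [smul_apply, add_apply, sub_apply, ContinuousLinearMap.smulRight_apply,
    innerSL_apply_apply, inner_sub_single, ContinuousLinearMap.id_apply, smul_eq_mul,
    Pi.mul_apply, nsmul_eq_mul, PiLp.proj_apply, PiLp.single_eq_same, inversionSecondPartial]
  module

theorem sum_inversionPartial_apply_apply (lam : ℝ) (hp : p ≠ x)
    (B : 𝔼 n →L[ℝ] 𝔼 n →L[ℝ] ℝ) :
    ∑ j, B (inversionPartial x lam j p) (inversionPartial x lam j p)
      = (lam ^ 2 / ‖p - x‖ ^ 2) ^ 2 * ∑ j, B (𝐞 j) (𝐞 j) := by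
  have hw (j : Fin n) : p j - x j = (p - x) j := rfl
  simp only [inversionPartial, map_smul, smul_apply, smul_eq_mul, hw]
  rw [← sum_reflection_apply_apply B (sub_ne_zero.mpr hp), Finset.mul_sum]
  exact Finset.sum_congr rfl fun j _ => by ring

theorem sum_inversionSecondPartial (lam : ℝ) (hp : p ≠ x) :
    ∑ j, inversionSecondPartial x lam j p
      = (2 * (2 - n) * lam ^ 2 / (‖p - x‖ ^ 2) ^ 2) • (p - x) := by
  have hr : ‖p - x‖ ^ 2 ≠ 0 := by simpa [sub_eq_zero] using hp
  have hw (j : Fin n) : p j - x j = (p - x) j := rfl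
  simp only [inversionSecondPartial, hw, Finset.sum_sub_distrib, ← smul_smul, ← Finset.smul_sum,
    ← Finset.sum_smul, ← Finset.mul_sum, EuclideanSpace.sum_apply_smul_single,
    EuclideanSpace.sum_apply_sq, Finset.sum_const, Finset.card_univ, Fintype.card_fin, nsmul_eq_mul]
  rw [← sub_smul]
  congr 1
  field_simp
  ring

end Inversion

section LogKelvin

variable {n : ℕ} {x p y : 𝔼 n} {lam : ℝ} {u : 𝔼 n → ℝ}

noncomputable def logKelvin (x : 𝔼 n) (lam : ℝ) (u : 𝔼 n → ℝ) (y : 𝔼 n) : ℝ :=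
  u (inversion x lam y) + Real.log (lam / ‖y - x‖)

theorem hasFDerivAt_log_div_norm_sub (hlam : lam ≠ 0) (hp : p ≠ x) :
    HasFDerivAt (fun q => Real.log (lam / ‖q - x‖))
      (-(‖p - x‖ ^ 2)⁻¹ • innerSL ℝ (p - x)) p := by
  have hr : ‖p - x‖ ^ 2 * (lam ^ 2)⁻¹ ≠ 0 := by simp [sub_eq_zero, hp, hlam]
  have hfun : (fun q => Real.log (lam / ‖q - x‖))
      = fun q => -2⁻¹ * Real.log (‖q - x‖ ^ 2 * (lam ^ 2)⁻¹) := by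
    funext q
    rw [← div_eq_mul_inv, ← div_pow, Real.log_pow, ← inv_div, Real.log_inv]
    push_cast
    ring
  rw [hfun]
  refine ((((hasFDerivAt_id p).sub_const x).norm_sq.mul_const (lam ^ 2)⁻¹).log hr).const_mul _
    |>.congr_fderiv ?_
  ext h
  simp only [id_eq, mul_inv_rev, inv_inv, map_sub, ContinuousLinearMap.comp_id, neg_smul,
    neg_apply, smul_apply, sub_apply, coe_innerSL_apply, nsmul_eq_mul, Nat.cast_ofNat,
    smul_eq_mul, neg_inj]
  field_simp

theorem partialD_logKelvin (hlam : lam ≠ 0) (hp : p ≠ x)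
    (hu : DifferentiableAt ℝ u (inversion x lam p)) (j : Fin n) :
    partialD j (logKelvin x lam u) p
      = fderiv ℝ u (inversion x lam p) (inversionPartial x lam j p)
        - (p j - x j) / ‖p - x‖ ^ 2 := by
  obtain ⟨D, hD, hDj⟩ := hasFDerivAt_inversion lam hp
  have hv : HasFDerivAt (logKelvin x lam u) _ p :=
    (hu.hasFDerivAt.comp p hD).add (hasFDerivAt_log_div_norm_sub hlam hp)
  rw [hv.partialD_eq j]
  simp only [add_apply, ContinuousLinearMap.comp_apply, hDj, smul_apply, innerSL_apply_apply,
    inner_sub_single, smul_eq_mul]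
  ring

theorem partialD_partialD_logKelvin (hlam : lam ≠ 0) (hy : y ≠ x)
    (hu : ContDiffAt ℝ 2 u (inversion x lam y)) (j : Fin n) :
    partialD j (fun p => partialD j (logKelvin x lam u) p) y
      = fderiv ℝ (fderiv ℝ u) (inversion x lam y) (inversionPartial x lam j y)
          (inversionPartial x lam j y)
        + fderiv ℝ u (inversion x lam y) (inversionSecondPartial x lam j y)
        + (2 / (‖y - x‖ ^ 2) ^ 2 * (y j - x j) ^ 2 - 1 / ‖y - x‖ ^ 2) := by
  obtain ⟨D, hD, hDj⟩ := hasFDerivAt_inversion lam hy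
  obtain ⟨S, hS, hSj⟩ := hasFDerivAt_inversionPartial lam hy j
  have hdu : ∀ᶠ q in 𝓝 y, DifferentiableAt ℝ u (inversion x lam q) :=
    hD.continuousAt.eventually
      ((hu.eventually (by simp)).mono fun _ h => h.differentiableAt two_ne_zero)
  have hev : (fun p => partialD j (logKelvin x lam u) p) =ᶠ[𝓝 y] fun q =>
      fderiv ℝ u (inversion x lam q) (inversionPartial x lam j q)
        - (q j - x j) * (‖q - x‖ ^ 2)⁻¹ := by
    filter_upwards [eventually_ne_nhds hy, hdu] with q hq hqu
    rw [partialD_logKelvin hlam hq hqu, div_eq_mul_inv]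
  have hddu : DifferentiableAt ℝ (fderiv ℝ u) (inversion x lam y) :=
    (hu.fderiv_right (m := 1) le_rfl).differentiableAt one_ne_zero
  have hg : HasFDerivAt (fun q => fderiv ℝ u (inversion x lam q) (inversionPartial x lam j q)
      - (q j - x j) * (‖q - x‖ ^ 2)⁻¹) _ y :=
    ((hddu.hasFDerivAt.comp y hD).clm_apply hS).sub
      ((hasFDerivAt_apply_sub j).mul (hasFDerivAt_inv_norm_sub_sq hy))
  rw [(hg.congr_of_eventuallyEq hev).partialD_eq j]
  simp only [sub_apply, add_apply, ContinuousLinearMap.comp_apply, ContinuousLinearMap.flip_apply,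
    Function.comp_apply, hDj, hSj, smul_apply, innerSL_apply_apply, inner_sub_single, smul_eq_mul,
    PiLp.proj_apply, PiLp.single_eq_same]
  ring

theorem lapl_logKelvin (hlam : lam ≠ 0) (hy : y ≠ x)
    (hu : ContDiffAt ℝ 2 u (inversion x lam y)) :
    lapl (logKelvin x lam u) y
      = (lam ^ 2 / ‖y - x‖ ^ 2) ^ 2 * lapl u (inversion x lam y)
        + 2 * (2 - n) * lam ^ 2 / (‖y - x‖ ^ 2) ^ 2 * fderiv ℝ u (inversion x lam y) (y - x)
        + (2 - n) / ‖y - x‖ ^ 2 := by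
  have hddu : DifferentiableAt ℝ (fderiv ℝ u) (inversion x lam y) :=
    (hu.fderiv_right (m := 1) le_rfl).differentiableAt one_ne_zero
  have hw (j : Fin n) : y j - x j = (y - x) j := rfl
  rw [lapl, Finset.sum_congr rfl fun j _ => partialD_partialD_logKelvin hlam hy hu j,
    Finset.sum_add_distrib, Finset.sum_add_distrib, sum_inversionPartial_apply_apply lam hy,
    ← map_sum, sum_inversionSecondPartial lam hy, ← lapl_eq_sum_fderiv_fderiv hddu]
  simp only [hw, Finset.sum_sub_distrib, ← Finset.mul_sum, EuclideanSpace.sum_apply_sq,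
    Finset.sum_const, Finset.card_univ, Fintype.card_fin, nsmul_eq_mul, map_smul, smul_eq_mul]
  field_simp

end LogKelvin

theorem inversion_apply_of_apply_eq_zero {n : ℕ} {x : 𝔼 n} {i : Fin n}
    (hx : x i = 0) (lam : ℝ) (y : 𝔼 n) :
    inversion x lam y i = lam ^ 2 / ‖y - x‖ ^ 2 * y i := by
  simp [inversion, hx]

theorem log_kelvin_invariance_general (n : ℕ) (i : Fin n)
    (u : EuclideanSpace ℝ (Fin n) → ℝ)
    (hu : ContDiffOn ℝ 2 u {y | 0 < y i})
    (heq : ∀ y, 0 < y i → divA i (2 - (n : ℝ)) u y = 0)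
    (x : EuclideanSpace ℝ (Fin n)) (hx : x i = 0) (lam : ℝ) (hlam : 0 < lam) :
    ∀ y : EuclideanSpace ℝ (Fin n), 0 < y i →
      divA i (2 - (n : ℝ))
        (fun z => u (inversion x lam z) + Real.log (lam / ‖z - x‖)) y = 0 := by
  intro y hy
  have hyx : y ≠ x := by rintro rfl; exact hy.ne' hx
  have hr : 0 < ‖y - x‖ ^ 2 := pow_pos (norm_pos_iff.mpr (sub_ne_zero.mpr hyx)) 2
  set z := inversion x lam y
  have hzi : z i = lam ^ 2 / ‖y - x‖ ^ 2 * y i := inversion_apply_of_apply_eq_zero hx lam y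
  have hz : 0 < z i := hzi ▸ by positivity
  have huz : ContDiffAt ℝ 2 u z :=
    hu.contDiffAt ((isOpen_lt continuous_const (EuclideanSpace.proj i).continuous).mem_nhds hz)
  have hdivz : z i * lapl u z + (2 - n) * partialD i u z = 0 := by
    have h := heq z hz
    rw [divA_eq_rpow_mul i _ u hz] at h
    exact (mul_eq_zero.mp h).resolve_left (by positivity)
  change divA i _ (logKelvin x lam u) y = 0
  rw [divA_eq_rpow_mul i _ _ hy, lapl_logKelvin hlam.ne' hyx huz,
    partialD_logKelvin hlam.ne' hyx (huz.differentiableAt two_ne_zero)]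
  simp only [inversionPartial, map_smul, map_sub, hx, sub_zero, smul_eq_mul]
  rw [hzi, partialD] at hdivz
  linear_combination (y i ^ (2 - (n : ℝ) - 1) * (lam ^ 2 / ‖y - x‖ ^ 2)) * hdivz

/-- **Invariance for the logarithmic Kelvin transform (`a = 2-n`).** If `u ∈ C²(ℝⁿ₊)`
satisfies `div(yₙ^(2-n) ∇u) = 0` in `ℝⁿ₊`, then for every `x ∈ ∂ℝⁿ₊` and `λ > 0` the
function `v(y) = u(x + λ²(y-x)/|y-x|²) + ln(λ/|y-x|)` satisfies the same equation. -/
theorem log_kelvin_invariance (n : ℕ) (hn : 2 ≤ n) (i : Fin n) (hi : (i : ℕ) = n - 1)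
    (u : EuclideanSpace ℝ (Fin n) → ℝ)
    (hu : ContDiffOn ℝ 2 u {y | 0 < y i})
    (heq : ∀ y, 0 < y i → divA i (2 - (n : ℝ)) u y = 0)
    (x : EuclideanSpace ℝ (Fin n)) (hx : x i = 0) (lam : ℝ) (hlam : 0 < lam) :
    ∀ y : EuclideanSpace ℝ (Fin n), 0 < y i →
      divA i (2 - (n : ℝ))
        (fun z => u (inversion x lam z) + Real.log (lam / ‖z - x‖)) y = 0 :=
  log_kelvin_invariance_general n i u hu heq x hx lam hlam
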